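/- arXiv:1307.5367 — 5 statements merged into one kernel-verified Lean document; each statement's English description precedes it below -/
import Mathlib

section
/- As x → 0 (through nonzero values), l(x) admits the Taylor expansion l(x) = 2/3 − x/3 + 7x²/120 − x³/720 − 29x⁴/40320 + x⁵/80640 + 79x⁶/4838400 − x⁷/9676800 − 697x⁸/1703116800 + O(x⁹); that is, the difference between l(x) and this degree-8 polynomial is O(x⁹) as x → 0. -/
open Real Asymptotics Filter Topology

/-- The function `l(x) = (2 + e^x (x − 2) + x) / ((e^{x/2} − 1)³ (e^{x/2} + 1))`. -/
noncomputable def lFun (x : ℝ) : ℝ :=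
  (2 + Real.exp x * (x - 2) + x) / ((Real.exp (x / 2) - 1) ^ 3 * (Real.exp (x / 2) + 1))

/-!
Both the numerator `N = 2 + x + (x - 2) eˣ` and the denominator
`D = (e^{x/2} - 1)³ (e^{x/2} + 1) = e^{2x} - 2 e^{3x/2} + 2 e^{x/2} - 1` are linear combinations
of exponentials with polynomial coefficients, so their expansions `N = x³ n(x) + O(x¹²)` and
`D = x³ d(x) + O(x¹²)` can be read off termwise. The polynomial `P` is the one for which
`n - P d` is divisible by `x⁹`, hence `N - P D = O(x¹²)`; since `D ~ x³/4`, dividing by `D`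
gives `l - P = O(x⁹)`.
-/

open Finset
open scoped Nat

theorem exp_mul_sub_sum_range_isBigO_pow (c : ℝ) (n : ℕ) :
    (fun x ↦ exp (c * x) - ∑ i ∈ range n, (c * x) ^ i / i !) =O[𝓝 0] (· ^ n) := by
  have hc : Tendsto (fun x : ℝ ↦ c * x) (𝓝 0) (𝓝 0) := by
    simpa using (continuous_const_mul c).tendsto 0
  refine ((Real.exp_sub_sum_range_isBigO_pow n).comp_tendsto hc).trans ?_
  simpa only [Function.comp_def, mul_pow] using
    (isBigO_refl (· ^ n) (𝓝 (0 : ℝ))).const_mul_left (c ^ n)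

noncomputable def lNum (x : ℝ) : ℝ := 2 + exp x * (x - 2) + x

noncomputable def lDen (x : ℝ) : ℝ := (exp (x / 2) - 1) ^ 3 * (exp (x / 2) + 1)

theorem lDen_eq (x : ℝ) : lDen x = exp (2 * x) - 2 * exp (3 / 2 * x) + 2 * exp (1 / 2 * x) - 1 := by
  have h2 : exp (2 * x) = exp (x / 2) ^ 4 := by rw [← Real.exp_nat_mul]; ring_nf
  have h3 : exp (3 / 2 * x) = exp (x / 2) ^ 3 := by rw [← Real.exp_nat_mul]; ring_nf
  rw [lDen, h2, h3, one_div_mul_eq_div]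
  ring

theorem lDen_ne_zero {x : ℝ} (hx : x ≠ 0) : lDen x ≠ 0 := by
  have : exp (x / 2) - 1 ≠ 0 := sub_ne_zero.2 (by simpa [Real.exp_eq_one_iff] using hx)
  unfold lDen
  positivity

noncomputable def lNumTaylor (x : ℝ) : ℝ := ∑ i ∈ range 9, (i + 1 : ℝ) / (i + 3)! * x ^ i

noncomputable def lDenTaylor (x : ℝ) : ℝ :=
  ∑ i ∈ range 9, (2 ^ (i + 3) - 2 * (3 / 2) ^ (i + 3) + 2 * (1 / 2) ^ (i + 3)) / (i + 3)! * x ^ i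

noncomputable def lTaylor (x : ℝ) : ℝ :=
  2 / 3 - x / 3 + 7 * x ^ 2 / 120 - x ^ 3 / 720 - 29 * x ^ 4 / 40320 + x ^ 5 / 80640 +
    79 * x ^ 6 / 4838400 - x ^ 7 / 9676800 - 697 * x ^ 8 / 1703116800

theorem lNum_taylor : (fun x ↦ lNum x - x ^ 3 * lNumTaylor x) =O[𝓝 0] (· ^ 12) := by
  have hx : (fun x : ℝ ↦ x - 2) =O[𝓝 0] (fun _ ↦ (1 : ℝ)) :=
    ((continuous_id.sub continuous_const).tendsto 0).isBigO_one ℝ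
  have hR := hx.mul (Real.exp_sub_sum_range_isBigO_pow 12)
  simp only [one_mul] at hR
  refine (hR.add ((isBigO_refl (· ^ 12) _).const_mul_left (1 / 11 ! : ℝ))).congr' ?_ .rfl
  filter_upwards with x
  simp only [lNum, lNumTaylor, sum_range_succ, sum_range_zero, Nat.factorial]
  push_cast
  ring

theorem lDen_taylor : (fun x ↦ lDen x - x ^ 3 * lDenTaylor x) =O[𝓝 0] (· ^ 12) := by
  refine (((exp_mul_sub_sum_range_isBigO_pow 2 12).sub
    ((exp_mul_sub_sum_range_isBigO_pow (3 / 2) 12).const_mul_left 2)).add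
    ((exp_mul_sub_sum_range_isBigO_pow (1 / 2) 12).const_mul_left 2)).congr' ?_ .rfl
  filter_upwards with x
  simp only [lDen_eq, lDenTaylor, sum_range_succ, sum_range_zero, Nat.factorial]
  push_cast
  ring

theorem lNumTaylor_sub_lTaylor_mul_lDenTaylor_isBigO :
    (fun x ↦ lNumTaylor x - lTaylor x * lDenTaylor x) =O[𝓝 0] (· ^ 9) := by
  -- the quotient of the degree-16 polynomial `lNumTaylor - lTaylor * lDenTaylor` by `x ^ 9`
  have hq : Continuous fun x : ℝ ↦ 652229 / 122624409600 - 7868659 / 4291854336000 * x +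
      359851 / 2080899072000 * x ^ 2 + 1441817 / 74912366592000 * x ^ 3 -
      1017239 / 412018016256000 * x ^ 4 - 11003177 / 43948588400640000 * x ^ 5 +
      288803 / 2690729902080000 * x ^ 6 + 6758809 / 351588707205120000 * x ^ 7 := by
    fun_prop
  refine ((isBigO_refl (· ^ 9) _).mul ((hq.tendsto 0).isBigO_one ℝ)).congr' ?_ (by simp)
  filter_upwards with x
  simp only [lNumTaylor, lDenTaylor, lTaylor, sum_range_succ, sum_range_zero, Nat.factorial]
  push_cast
  ring

theorem lNum_sub_lTaylor_mul_lDen_isBigO :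
    (fun x ↦ lNum x - lTaylor x * lDen x) =O[𝓝 0] (· ^ 12) := by
  have hP : lTaylor =O[𝓝 0] (fun _ ↦ (1 : ℝ)) :=
    (Continuous.tendsto (by unfold lTaylor; fun_prop) 0).isBigO_one ℝ
  have hQ := (isBigO_refl (· ^ 3) (𝓝 (0 : ℝ))).mul lNumTaylor_sub_lTaylor_mul_lDenTaylor_isBigO
  simp only [← pow_add] at hQ
  have hD := hP.mul lDen_taylor
  simp only [one_mul] at hD
  refine ((hQ.add lNum_taylor).sub hD).congr' ?_ .rfl
  filter_upwards with x
  ring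

theorem lDen_isEquivalent : lDen ~[𝓝 0] fun x ↦ x ^ 3 / 4 := by
  have hd : lDenTaylor ~[𝓝 0] Function.const ℝ (1 / 4) := by
    refine (isEquivalent_const_iff_tendsto (by norm_num)).2 ?_
    have : Continuous lDenTaylor := by unfold lDenTaylor; fun_prop
    convert this.tendsto 0 using 2
    norm_num [lDenTaylor, sum_range_succ, Nat.factorial]
  have hmain : (fun x ↦ x ^ 3 * lDenTaylor x) ~[𝓝 0] fun x ↦ x ^ 3 / 4 :=
    (IsEquivalent.refl.mul hd).congr_right (.of_eq (by ext x; simp [div_eq_mul_inv]))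
  have hx3 : (fun x : ℝ ↦ x ^ 3) =O[𝓝 0] fun x ↦ x ^ 3 / 4 := by
    simpa [div_eq_inv_mul] using isBigO_self_const_mul (by norm_num : (4 : ℝ)⁻¹ ≠ 0) _ (𝓝 0)
  have hrem : (fun x ↦ lDen x - x ^ 3 * lDenTaylor x) =o[𝓝 0] fun x ↦ x ^ 3 / 4 :=
    lDen_taylor.trans_isLittleO ((isLittleO_pow_pow (by norm_num : 3 < 12)).trans_isBigO hx3)
  exact (hmain.add_isLittleO hrem).congr_left (.of_eq (by ext x; simp))

/-- The Taylor expansion of `l` up to order 8 at `x = 0`, through nonzero values. -/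
theorem lFun_taylor :
    (fun x : ℝ => lFun x -
      (2 / 3 - x / 3 + 7 * x ^ 2 / 120 - x ^ 3 / 720 - 29 * x ^ 4 / 40320 + x ^ 5 / 80640 +
        79 * x ^ 6 / 4838400 - x ^ 7 / 9676800 - 697 * x ^ 8 / 1703116800))
      =O[𝓝[≠] (0 : ℝ)] (fun x : ℝ => x ^ 9) := by
  have hinv : (fun x ↦ (lDen x)⁻¹) =O[𝓝 0] fun x ↦ (x ^ 3 / 4)⁻¹ :=
    lDen_isEquivalent.isBigO_symm.inv_rev (.of_forall fun x hx ↦ by simp_all [lDen])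
  have hpow : (fun x : ℝ ↦ x ^ 12 * (x ^ 3 / 4)⁻¹) =O[𝓝 0] (· ^ 9) := by
    refine ((isBigO_refl (· ^ 9) _).const_mul_left 4).congr_left fun x ↦ ?_
    rcases eq_or_ne x 0 with rfl | hx
    · simp
    · field_simp
  refine (((lNum_sub_lTaylor_mul_lDen_isBigO.mul hinv).trans hpow).mono
    nhdsWithin_le_nhds).congr' ?_ .rfl
  filter_upwards [self_mem_nhdsWithin] with x hx
  change (lNum x - lTaylor x * lDen x) * (lDen x)⁻¹ = lNum x / lDen x - lTaylor x
  field_simp [lDen_ne_zero hx]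
end

section
/- For all real numbers a, b > 0 with a ≠ b, one has 2 a² ∫₀^∞ r³ (1 + r²a²)^{−2} (1 + r²b²)^{−1} dr = a^{−2} · ℒ₁(b²/a²). -/
/-!
With `A = a²`, `B = b²` the integrand `x³ / ((1 + A x²)² (1 + B x²))` has an elementary primitive,
found by partial fractions in `x²`. Its values at `0` and `∞` give
`∫₀^∞ = log (A / B) / (2 (B - A)²) + 1 / (2 (B - A) A)`, and this is `ℒ₁(B / A) / (2 A²)` since
`ℒ₁(u) = (u - 1 - log u) / (u - 1)²`.
-/

open MeasureTheory

/-- The modified logarithm function `ℒ_m` of Connes–Tretkoff: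
`ℒ_m(u) = (−1)^m (u−1)^{−(m+1)} (log u − Σ_{i=1}^{m} (−1)^{i+1} (u−1)^i / i)`. -/
noncomputable def modLog (m : ℕ) (u : ℝ) : ℝ :=
  (-1 : ℝ) ^ m * (u - 1) ^ (-(m + 1 : ℤ)) *
    (Real.log u - ∑ i ∈ Finset.Icc 1 m, (-1 : ℝ) ^ (i + 1) * (u - 1) ^ i / (i : ℝ))

open Set Filter Topology

lemma modLog_one (u : ℝ) : modLog 1 u = (u - 1 - Real.log u) / (u - 1) ^ 2 := by
  rw [modLog, Finset.Icc_self, Finset.sum_singleton, show (-((1 : ℕ) + 1 : ℤ)) = -2 by norm_num,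
    zpow_neg, zpow_two]
  ring

lemma tendsto_one_add_mul_div_one_add_mul_atTop (A : ℝ) {B : ℝ} (hB : B ≠ 0) :
    Tendsto (fun t : ℝ => (1 + A * t) / (1 + B * t)) atTop (𝓝 (A / B)) := by
  have hinv : Tendsto (fun t : ℝ => t⁻¹) atTop (𝓝 0) := tendsto_inv_atTop_zero
  have hlim : Tendsto (fun t : ℝ => (t⁻¹ + A) / (t⁻¹ + B)) atTop (𝓝 ((0 + A) / (0 + B))) :=
    (hinv.add_const A).div (hinv.add_const B) (by simpa using hB)
  rw [zero_add, zero_add] at hlim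
  refine hlim.congr' ?_
  filter_upwards [eventually_gt_atTop 0] with t ht
  field_simp

section

variable {A B : ℝ}

lemma hasDerivAt_primitive_cube_div (hA : 0 < A) (hB : 0 ≤ B) (hAB : A ≠ B) (x : ℝ) :
    HasDerivAt
      (fun x => Real.log ((1 + A * x ^ 2) / (1 + B * x ^ 2)) / (2 * (B - A) ^ 2)
        - (1 + A * x ^ 2)⁻¹ / (2 * (B - A) * A))
      (x ^ 3 / ((1 + x ^ 2 * A) ^ 2 * (1 + x ^ 2 * B))) x := by
  have hPA : 0 < 1 + A * x ^ 2 := by positivity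
  have hPB : 0 < 1 + B * x ^ 2 := by positivity
  have hdA : HasDerivAt (fun x : ℝ => 1 + A * x ^ 2) (A * (2 * x)) x := by
    simpa using ((hasDerivAt_pow 2 x).const_mul A).const_add 1
  have hdB : HasDerivAt (fun x : ℝ => 1 + B * x ^ 2) (B * (2 * x)) x := by
    simpa using ((hasDerivAt_pow 2 x).const_mul B).const_add 1
  have hlog := (hdA.div hdB hPB.ne').log (div_pos hPA hPB).ne'
  have hinv := (hdA.inv hPA.ne').div_const (2 * (B - A) * A)
  refine ((hlog.div_const (2 * (B - A) ^ 2)).sub hinv).congr_deriv ?_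
  simp only [Pi.div_apply]
  field_simp
  ring

lemma tendsto_primitive_cube_div_atTop (hA : 0 < A) (hB : 0 < B) :
    Tendsto
      (fun x => Real.log ((1 + A * x ^ 2) / (1 + B * x ^ 2)) / (2 * (B - A) ^ 2)
        - (1 + A * x ^ 2)⁻¹ / (2 * (B - A) * A))
      atTop (𝓝 (Real.log (A / B) / (2 * (B - A) ^ 2))) := by
  have hsq : Tendsto (fun x : ℝ => x ^ 2) atTop atTop := tendsto_pow_atTop two_ne_zero
  have hlog : Tendsto (fun x : ℝ => Real.log ((1 + A * x ^ 2) / (1 + B * x ^ 2))) atTop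
      (𝓝 (Real.log (A / B))) :=
    ((tendsto_one_add_mul_div_one_add_mul_atTop A hB.ne').comp hsq).log
      (div_pos hA hB).ne'
  have hinv : Tendsto (fun x : ℝ => (1 + A * x ^ 2)⁻¹) atTop (𝓝 0) :=
    tendsto_inv_atTop_zero.comp (tendsto_atTop_add_const_left _ 1 (hsq.const_mul_atTop hA))
  simpa using (hlog.div_const (2 * (B - A) ^ 2)).sub (hinv.div_const (2 * (B - A) * A))

lemma integral_Ioi_cube_div (hA : 0 < A) (hB : 0 < B) (hAB : A ≠ B) :
    ∫ x in Ioi 0, x ^ 3 / ((1 + x ^ 2 * A) ^ 2 * (1 + x ^ 2 * B)) =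
      Real.log (A / B) / (2 * (B - A) ^ 2) + 1 / (2 * (B - A) * A) := by
  rw [integral_Ioi_of_hasDerivAt_of_nonneg'
    (fun x _ => hasDerivAt_primitive_cube_div hA hB.le hAB x)
    (fun x (hx : 0 < x) => by positivity) (tendsto_primitive_cube_div_atTop hA hB)]
  simp

end

/-- Spectral form of the Connes–Tretkoff rearrangement identity for `𝒟_1 = ℒ_1(Δ)`. -/
theorem integral_modLog_one (a b : ℝ) (ha : 0 < a) (hb : 0 < b) (hab : a ≠ b) :
    2 * a ^ 2 * ∫ r in Set.Ioi (0 : ℝ),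
      r ^ 3 * (1 + r ^ 2 * a ^ 2) ^ (-(1 + 1) : ℤ) * (1 + r ^ 2 * b ^ 2)⁻¹ =
    (a ^ 2)⁻¹ * modLog 1 (b ^ 2 / a ^ 2) := by
  have hsq : a ^ 2 ≠ b ^ 2 := hab ∘ (pow_left_inj₀ ha.le hb.le two_ne_zero).mp
  have hintegrand (r : ℝ) : r ^ 3 * (1 + r ^ 2 * a ^ 2) ^ (-(1 + 1) : ℤ) * (1 + r ^ 2 * b ^ 2)⁻¹
      = r ^ 3 / ((1 + r ^ 2 * a ^ 2) ^ 2 * (1 + r ^ 2 * b ^ 2)) := by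
    rw [show (-(1 + 1) : ℤ) = -2 by norm_num, zpow_neg, zpow_ofNat, div_eq_mul_inv, mul_inv,
      mul_assoc]
  simp only [hintegrand]
  rw [integral_Ioi_cube_div (by positivity) (by positivity) hsq, modLog_one,
    ← inv_div (b ^ 2) (a ^ 2), Real.log_inv]
  have hu : b ^ 2 / a ^ 2 - 1 ≠ 0 := by
    rw [sub_ne_zero, ne_eq, div_eq_one_iff_eq (by positivity)]
    exact hsq.symm
  generalize Real.log (b ^ 2 / a ^ 2) = L
  field_simp
  ring
end

section
/- For all real numbers a, b > 0 with a ≠ b, one has 2 a⁴ ∫₀^∞ r⁵ (1 + r²a²)^{−3} (1 + r²b²)^{−1} dr = a^{−2} · ℒ₂(b²/a²). -/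
open MeasureTheory

/-! Partial fractions in `r²` give an elementary primitive of the integrand, a combination of
`log (1 + r²A) - log (1 + r²B)`, `(1 + r²A)⁻¹` and `(1 + r²A)⁻²` with `A = a²`, `B = b²`.
The integrand is nonnegative, so the improper integral over `(0, ∞)` is the limit of the primitive
at infinity minus its value at `0`, and the constant this produces is `ℒ₂(B / A) / A` written out. -/

open Real Filter Topology

theorem modLog_two (u : ℝ) :
    modLog 2 u = ((u - 1) ^ 3)⁻¹ * (log u - (u - 1) + (u - 1) ^ 2 / 2) := by
  rw [modLog, show Finset.Icc 1 2 = {1, 2} from rfl, Finset.sum_pair (by decide),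
    show -((2 : ℕ) + 1 : ℤ) = -(3 : ℕ) from rfl, zpow_neg, zpow_natCast]
  push_cast
  ring

theorem tendsto_log_one_add_mul_sub_log {A : ℝ} (hA : 0 < A) :
    Tendsto (fun x => log (1 + x * A) - log x) atTop (𝓝 (log A)) := by
  have hlim : Tendsto (fun x : ℝ => log (x⁻¹ + A)) atTop (𝓝 (log A)) := by
    have := (tendsto_inv_atTop_zero (𝕜 := ℝ)).add_const A
    rw [zero_add] at this
    exact (continuousAt_log hA.ne').tendsto.comp this
  refine hlim.congr' ?_
  filter_upwards [eventually_gt_atTop 0] with x hx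
  rw [← log_div (by positivity) hx.ne', add_div, one_div, mul_div_cancel_left₀ _ hx.ne']

noncomputable def modLogTwoPrimitive (A B r : ℝ) : ℝ :=
  (log (1 + r ^ 2 * A) - log (1 + r ^ 2 * B)) / (2 * (A - B) ^ 3) +
    (2 * A - B) / (2 * A ^ 2 * (A - B) ^ 2) * (1 + r ^ 2 * A)⁻¹ -
    1 / (4 * A ^ 2 * (A - B)) * ((1 + r ^ 2 * A) ^ 2)⁻¹

section

variable {A B : ℝ}

theorem hasDerivAt_modLogTwoPrimitive (hA : 0 < A) (hB : 0 ≤ B) (hAB : A ≠ B) (x : ℝ) :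
    HasDerivAt (modLogTwoPrimitive A B)
      (x ^ 5 / ((1 + x ^ 2 * A) ^ 3 * (1 + x ^ 2 * B))) x := by
  have hxA : 1 + x ^ 2 * A ≠ 0 := by positivity
  have hxB : 1 + x ^ 2 * B ≠ 0 := by positivity
  have hsq (C : ℝ) : HasDerivAt (fun r : ℝ => 1 + r ^ 2 * C) (2 * x * C) x := by
    simpa using ((hasDerivAt_pow 2 x).mul_const C).const_add 1
  have hlog := (((hsq A).log hxA).sub ((hsq B).log hxB)).div_const (2 * (A - B) ^ 3)
  have hinv := ((hsq A).inv hxA).const_mul ((2 * A - B) / (2 * A ^ 2 * (A - B) ^ 2))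
  have hinv_sq := (((hsq A).pow 2).inv (pow_ne_zero 2 hxA)).const_mul (1 / (4 * A ^ 2 * (A - B)))
  refine ((hlog.add hinv).sub hinv_sq).congr_deriv ?_
  simp only [Pi.pow_apply]
  field_simp
  ring

theorem tendsto_modLogTwoPrimitive (hA : 0 < A) (hB : 0 < B) :
    Tendsto (modLogTwoPrimitive A B) atTop (𝓝 ((log A - log B) / (2 * (A - B) ^ 3))) := by
  have hsq : Tendsto (fun r : ℝ => r ^ 2) atTop atTop := tendsto_pow_atTop two_ne_zero
  have hlog : Tendsto (fun r : ℝ => log (1 + r ^ 2 * A) - log (1 + r ^ 2 * B)) atTop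
      (𝓝 (log A - log B)) := by
    have := ((tendsto_log_one_add_mul_sub_log hA).sub
      (tendsto_log_one_add_mul_sub_log hB)).comp hsq
    simpa only [Function.comp_def, sub_sub_sub_cancel_right] using this
  have hinv : Tendsto (fun r : ℝ => (1 + r ^ 2 * A)⁻¹) atTop (𝓝 0) :=
    (tendsto_atTop_add_const_left _ 1 (hsq.atTop_mul_const hA)).inv_tendsto_atTop
  have := ((hlog.div_const (2 * (A - B) ^ 3)).add
    (hinv.const_mul ((2 * A - B) / (2 * A ^ 2 * (A - B) ^ 2)))).sub
    ((hinv.pow 2).const_mul (1 / (4 * A ^ 2 * (A - B))))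
  simp only [mul_zero, add_zero, sub_zero, ne_eq, OfNat.ofNat_ne_zero, not_false_eq_true,
    zero_pow, inv_pow] at this
  exact this

theorem integral_Ioi_pow_five_div (hA : 0 < A) (hB : 0 < B) (hAB : A ≠ B) :
    ∫ r in Set.Ioi (0 : ℝ), r ^ 5 / ((1 + r ^ 2 * A) ^ 3 * (1 + r ^ 2 * B)) =
      (log A - log B) / (2 * (A - B) ^ 3) - (2 * A - B) / (2 * A ^ 2 * (A - B) ^ 2) +
        1 / (4 * A ^ 2 * (A - B)) := by
  have hderiv := hasDerivAt_modLogTwoPrimitive hA hB.le hAB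
  rw [integral_Ioi_of_hasDerivAt_of_nonneg (hderiv 0).continuousAt.continuousWithinAt
    (fun x _ => hderiv x) (fun x (hx : 0 < x) => by positivity)
    (tendsto_modLogTwoPrimitive hA hB)]
  simp only [modLogTwoPrimitive]
  norm_num
  ring

end

/-- Spectral form of the Connes–Tretkoff rearrangement identity for `𝒟_2 = ℒ_2(Δ)`. -/
theorem integral_modLog_two (a b : ℝ) (ha : 0 < a) (hb : 0 < b) (hab : a ≠ b) :
    2 * a ^ 4 * ∫ r in Set.Ioi (0 : ℝ),
      r ^ 5 * (1 + r ^ 2 * a ^ 2) ^ (-(2 + 1) : ℤ) * (1 + r ^ 2 * b ^ 2)⁻¹ =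
    (a ^ 2)⁻¹ * modLog 2 (b ^ 2 / a ^ 2) := by
  have hab2 : a ^ 2 ≠ b ^ 2 := (pow_left_inj₀ ha.le hb.le two_ne_zero).not.mpr hab
  have hintegrand (r : ℝ) :
      r ^ 5 * (1 + r ^ 2 * a ^ 2) ^ (-(2 + 1) : ℤ) * (1 + r ^ 2 * b ^ 2)⁻¹ =
        r ^ 5 / ((1 + r ^ 2 * a ^ 2) ^ 3 * (1 + r ^ 2 * b ^ 2)) := by
    rw [div_eq_mul_inv, mul_inv, ← mul_assoc]
    norm_num
  simp_rw [hintegrand]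
  rw [integral_Ioi_pow_five_div (by positivity) (by positivity) hab2, modLog_two,
    log_div (by positivity) (by positivity)]
  field_simp
  ring
end

section
/- For all real numbers a, b > 0 with a ≠ b, one has 2 a⁶ ∫₀^∞ r⁷ (1 + r²a²)^{−4} (1 + r²b²)^{−1} dr = a^{−2} · ℒ₃(b²/a²). -/
/-!
The substitution `s = a²r²` turns the left-hand side into `a⁻²` times
`∫₀^∞ sᵐ / ((1 + s)^(m+1) (1 + u s)) ds` with `m = 3`, `u = b²/a²`, and this integral equals
`ℒ_m(u)` for every `m`. Indeed, `t = s / (1 + s)` turns it into `∫₀¹ tᵐ / (1 + (u - 1) t) dt`,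
and `x = (u - 1) t` into `(u - 1)^-(m+1) ∫₀^(u-1) xᵐ / (1 + x) dx`; the last integral is
`(-1)ᵐ` times the Taylor remainder of order `m` of `log (1 + x)` at `x = u - 1`.
-/

open MeasureTheory

open Real Set Filter Topology

/-- `∫₀ˣ tᵐ / (1 + t) dt`. -/
noncomputable def logTaylorRemainder (m : ℕ) (x : ℝ) : ℝ :=
  (-1) ^ m * (log (1 + x) - ∑ i ∈ Finset.Icc 1 m, (-1) ^ (i + 1) * x ^ i / i)

lemma logTaylorRemainder_zero_right (m : ℕ) : logTaylorRemainder m 0 = 0 := by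
  rw [logTaylorRemainder, Finset.sum_eq_zero fun i hi => ?_]
  · simp
  · simp [zero_pow (by grind : i ≠ 0)]

lemma logTaylorRemainder_succ (m : ℕ) (x : ℝ) :
    logTaylorRemainder (m + 1) x = x ^ (m + 1) / (m + 1) - logTaylorRemainder m x := by
  have hsign : (-1 : ℝ) ^ (m + 1) * (-1) ^ (m + 1 + 1) = -1 := by
    rw [← pow_add]
    exact Odd.neg_one_pow ⟨m + 1, by ring⟩
  simp only [logTaylorRemainder, Finset.sum_Icc_succ_top (by omega : 1 ≤ m + 1)]
  push_cast
  linear_combination (-x ^ (m + 1) / (m + 1)) * hsign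

lemma hasDerivAt_logTaylorRemainder (m : ℕ) {x : ℝ} (hx : 1 + x ≠ 0) :
    HasDerivAt (logTaylorRemainder m) (x ^ m / (1 + x)) x := by
  induction m with
  | zero =>
    have h0 : logTaylorRemainder 0 = fun y => log (1 + y) := by
      ext y
      simp [logTaylorRemainder]
    rw [h0]
    simpa using ((hasDerivAt_id x).const_add 1).log hx
  | succ m ih =>
    have hpow : HasDerivAt (fun y : ℝ => y ^ (m + 1) / (m + 1)) (x ^ m) x := by
      refine ((hasDerivAt_pow (m + 1) x).div_const _).congr_deriv ?_
      simp only [add_tsub_cancel_right]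
      push_cast
      field_simp
    rw [funext (logTaylorRemainder_succ m)]
    refine (hpow.sub ih).congr_deriv ?_
    field_simp
    ring

lemma modLog_eq_logTaylorRemainder (m : ℕ) (u : ℝ) :
    modLog m u = logTaylorRemainder m (u - 1) / (u - 1) ^ (m + 1) := by
  rw [modLog, logTaylorRemainder, add_sub_cancel, ← Nat.cast_one (R := ℤ), ← Nat.cast_add,
    zpow_neg, zpow_natCast]
  ring

lemma tendsto_div_one_add_atTop : Tendsto (fun s : ℝ => s / (1 + s)) atTop (𝓝 1) := by
  have h : Tendsto (fun s : ℝ => 1 - (1 + s)⁻¹) atTop (𝓝 (1 - 0)) :=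
    (tendsto_inv_atTop_zero.comp (tendsto_atTop_add_const_left _ 1 tendsto_id)).const_sub 1
  rw [sub_zero] at h
  refine h.congr' ?_
  filter_upwards [eventually_ge_atTop 0] with s hs
  field_simp
  ring

/-- The modified logarithm function `ℒ_m` of Connes–Tretkoff:
`ℒ_m(u) = (−1)^m (u−1)^{−(m+1)} (log u − Σ_{i=1}^{m} (−1)^{i+1} (u−1)^i / i)`. -/
noncomputable def modLogPrimitive (m : ℕ) (u s : ℝ) : ℝ :=
  logTaylorRemainder m ((u - 1) * (s / (1 + s))) / (u - 1) ^ (m + 1)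

lemma modLogPrimitive_zero (m : ℕ) (u : ℝ) : modLogPrimitive m u 0 = 0 := by
  simp [modLogPrimitive, logTaylorRemainder_zero_right]

lemma hasDerivAt_modLogPrimitive (m : ℕ) {u s : ℝ} (hu : 0 ≤ u) (hu1 : u ≠ 1) (hs : 0 ≤ s) :
    HasDerivAt (modLogPrimitive m u) (s ^ m / ((1 + s) ^ (m + 1) * (1 + u * s))) s := by
  have hc : u - 1 ≠ 0 := sub_ne_zero.2 hu1
  have ht : HasDerivAt (fun s => s / (1 + s)) (1 / (1 + s) ^ 2) s := by
    refine ((hasDerivAt_id s).div ((hasDerivAt_id s).const_add 1) (by positivity)).congr_deriv ?_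
    simp
  have hx : 1 + (u - 1) * (s / (1 + s)) = (1 + u * s) / (1 + s) := by
    field_simp
    ring
  have hR := hasDerivAt_logTaylorRemainder m (x := (u - 1) * (s / (1 + s)))
    (by rw [hx]; positivity)
  refine ((hR.comp s (ht.const_mul (u - 1))).div_const ((u - 1) ^ (m + 1))).congr_deriv ?_
  rw [hx, mul_pow, div_pow]
  field_simp
  ring

lemma tendsto_modLogPrimitive_atTop (m : ℕ) {u : ℝ} (hu : 0 < u) :
    Tendsto (modLogPrimitive m u) atTop (𝓝 (modLog m u)) := by
  have hR : ContinuousAt (logTaylorRemainder m) (u - 1) :=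
    (hasDerivAt_logTaylorRemainder m (by simpa using hu.ne')).continuousAt
  rw [modLog_eq_logTaylorRemainder]
  refine (hR.tendsto.comp ?_).div_const _
  simpa using tendsto_div_one_add_atTop.const_mul (u - 1)

theorem integral_Ioi_pow_div_eq_modLog (m : ℕ) {u : ℝ} (hu : 0 < u) (hu1 : u ≠ 1) :
    ∫ s in Ioi 0, s ^ m / ((1 + s) ^ (m + 1) * (1 + u * s)) = modLog m u := by
  rw [integral_Ioi_of_hasDerivAt_of_nonneg'
    (fun s hs => hasDerivAt_modLogPrimitive m hu.le hu1 hs)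
    (fun s hs => by have := mem_Ioi.1 hs; positivity) (tendsto_modLogPrimitive_atTop m hu),
    modLogPrimitive_zero, sub_zero]

theorem integral_Ioi_smul_comp_mul_sq {E : Type*} [NormedAddCommGroup E] [NormedSpace ℝ E]
    {c : ℝ} (hc : 0 < c) (g : ℝ → E) :
    ∫ r in Ioi 0, r • g (c * r ^ 2) = (2 * c)⁻¹ • ∫ s in Ioi 0, g s := by
  have h := integral_comp_rpow_Ioi (fun t => g (c * t)) (two_ne_zero (α := ℝ))
  rw [integral_comp_mul_left_Ioi g 0 hc, mul_zero] at h
  norm_num [mul_smul, integral_smul] at h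
  rw [mul_inv, mul_smul, ← h, smul_smul, inv_mul_cancel₀ two_ne_zero, one_smul]

/-- Spectral form of the Connes–Tretkoff rearrangement identity for `𝒟_3 = ℒ_3(Δ)`. -/
theorem integral_modLog_three (a b : ℝ) (ha : 0 < a) (hb : 0 < b) (hab : a ≠ b) :
    2 * a ^ 6 * ∫ r in Set.Ioi (0 : ℝ),
      r ^ 7 * (1 + r ^ 2 * a ^ 2) ^ (-(3 + 1) : ℤ) * (1 + r ^ 2 * b ^ 2)⁻¹ =
    (a ^ 2)⁻¹ * modLog 3 (b ^ 2 / a ^ 2) := by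
  have hu1 : b ^ 2 / a ^ 2 ≠ 1 := by
    rw [Ne, div_eq_one_iff_eq (by positivity), sq_eq_sq₀ hb.le ha.le]
    exact hab.symm
  have hintegrand (r : ℝ) :
      r ^ 7 * (1 + r ^ 2 * a ^ 2) ^ (-(3 + 1) : ℤ) * (1 + r ^ 2 * b ^ 2)⁻¹ = (a ^ 6)⁻¹ *
        r • ((a ^ 2 * r ^ 2) ^ 3 /
          ((1 + a ^ 2 * r ^ 2) ^ (3 + 1) * (1 + b ^ 2 / a ^ 2 * (a ^ 2 * r ^ 2)))) := by
    rw [smul_eq_mul, show (-(3 + 1) : ℤ) = -((3 + 1 : ℕ) : ℤ) by norm_num, zpow_neg,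
      zpow_natCast]
    field_simp
  simp_rw [hintegrand]
  rw [integral_const_mul, integral_Ioi_smul_comp_mul_sq (pow_pos ha 2)
      (fun s => s ^ 3 / ((1 + s) ^ (3 + 1) * (1 + b ^ 2 / a ^ 2 * s))),
    integral_Ioi_pow_div_eq_modLog 3 (by positivity) hu1, smul_eq_mul]
  field_simp
end

section
/- For every integer m ≥ 1 and all real numbers a, b > 0 with a ≠ b, one has 2 a^{2m} ∫₀^∞ r^{2m+1} (1 + r²a²)^{−(m+1)} (1 + r²b²)^{−1} dr = a^{−2} · ℒ_m(b²/a²). -/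
/-!
Substituting `w = 1 - (1 + r²a²)⁻¹ = r²a²/(1 + r²a²)`, a monotone bijection of `(0, ∞)` onto
`(0, 1)`, turns `2 a^(2m+2)` times the integral into `J_m(u) = ∫₀¹ wᵐ (1 + (u - 1) w)⁻¹ dw` with
`u = b²/a²`. Writing `w^(m+1) = (wᵐ - wᵐ (1 + (u - 1) w)⁻¹) / (u - 1)` gives
`J_(m+1) = ((m + 1)⁻¹ - J_m) / (u - 1)`, and `J_0 = log u / (u - 1)`; `ℒ_m(u)` satisfies the same
recursion.
-/

open MeasureTheory

open Real Set

lemma modLog_eq (m : ℕ) (u : ℝ) :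
    modLog m u = (-1) ^ m * ((u - 1) ^ (m + 1))⁻¹ *
      (log u - ∑ i ∈ Finset.Icc 1 m, (-1 : ℝ) ^ (i + 1) * (u - 1) ^ i / i) := by
  rw [modLog, zpow_neg, ← Nat.cast_succ, zpow_natCast]

lemma modLog_zero (u : ℝ) : modLog 0 u = (u - 1)⁻¹ * log u := by
  simp [modLog_eq]

lemma modLog_succ (m : ℕ) (u : ℝ) :
    modLog (m + 1) u = (u - 1)⁻¹ * (((m : ℝ) + 1)⁻¹ - modLog m u) := by
  rcases eq_or_ne u 1 with rfl | hu
  · simp [modLog_eq]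
  simp only [modLog_eq, Finset.sum_Icc_succ_top (Nat.le_add_left 1 m), pow_succ]
  have hsign : (-1 : ℝ) ^ m * (-1) ^ m = 1 := by rw [← mul_pow]; norm_num
  generalize (-1 : ℝ) ^ m = s at hsign ⊢
  push_cast
  field_simp
  linear_combination (u - 1) ^ (m + 1) * hsign

lemma one_add_sub_one_mul_pos {u w : ℝ} (hu : 0 < u) (hw : w ∈ Icc (0 : ℝ) 1) :
    0 < 1 + (u - 1) * w := by
  rcases le_or_gt 1 u with h | h <;> nlinarith [hw.1, hw.2]

theorem integral_pow_mul_inv_one_add_sub_one_mul (m : ℕ) {u : ℝ} (hu : 0 < u) (hu1 : u ≠ 1) :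
    ∫ w in (0 : ℝ)..1, w ^ m * (1 + (u - 1) * w)⁻¹ = modLog m u := by
  have hc : u - 1 ≠ 0 := sub_ne_zero.2 hu1
  have hpos : ∀ w ∈ uIcc (0 : ℝ) 1, 0 < 1 + (u - 1) * w := fun w hw =>
    one_add_sub_one_mul_pos hu (by rwa [uIcc_of_le zero_le_one] at hw)
  induction m with
  | zero =>
    have hcomp := intervalIntegral.integral_comp_mul_add (fun x : ℝ => x⁻¹) hc 1
      (a := 0) (b := 1)
    simp only [mul_zero, mul_one, zero_add, sub_add_cancel] at hcomp
    simp_rw [pow_zero, one_mul, add_comm (1 : ℝ) ((u - 1) * _), hcomp,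
      integral_inv_of_pos one_pos hu, div_one, smul_eq_mul, modLog_zero]
  | succ m ih =>
    have hrec : EqOn (fun w : ℝ => w ^ (m + 1) * (1 + (u - 1) * w)⁻¹)
        (fun w => (u - 1)⁻¹ * (w ^ m - w ^ m * (1 + (u - 1) * w)⁻¹)) (uIcc 0 1) := by
      intro w hw
      have := (hpos w hw).ne'
      field_simp
      ring
    have hint : IntervalIntegrable (fun w : ℝ => w ^ m * (1 + (u - 1) * w)⁻¹) volume 0 1 :=
      ((continuousOn_pow m).mul
        (ContinuousOn.inv₀ (by fun_prop) fun w hw => (hpos w hw).ne')).intervalIntegrable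
    rw [intervalIntegral.integral_congr hrec, intervalIntegral.integral_const_mul,
      intervalIntegral.integral_sub (intervalIntegral.intervalIntegrable_pow m) hint,
      integral_pow, ih, modLog_succ]
    norm_num

noncomputable def radialSubst (a r : ℝ) : ℝ := 1 - (1 + r ^ 2 * a ^ 2)⁻¹

lemma hasDerivAt_radialSubst (a r : ℝ) :
    HasDerivAt (radialSubst a) (2 * r * a ^ 2 / (1 + r ^ 2 * a ^ 2) ^ 2) r := by
  have h : HasDerivAt (fun r => 1 + r ^ 2 * a ^ 2) (2 * r * a ^ 2) r := by
    simpa using ((hasDerivAt_pow 2 r).mul_const (a ^ 2)).const_add 1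
  exact ((h.inv (by positivity)).const_sub 1).congr_deriv (by ring)

lemma monotoneOn_radialSubst (a : ℝ) : MonotoneOn (radialSubst a) (Ici 0) := by
  intro r hr s _ hrs
  simp only [radialSubst]
  gcongr

lemma radialSubst_image_Ioi {a : ℝ} (ha : a ≠ 0) : radialSubst a '' Ioi 0 = Ioo 0 1 := by
  have ha2 : 0 < a ^ 2 := by positivity
  ext w
  constructor
  · rintro ⟨r, hr, rfl⟩
    have h1 : 1 < 1 + r ^ 2 * a ^ 2 := lt_add_of_pos_right 1 (mul_pos (pow_pos hr 2) ha2)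
    exact ⟨sub_pos.2 (inv_lt_one_of_one_lt₀ h1), sub_lt_self _ (by positivity)⟩
  · rintro ⟨hw0, hw1⟩
    have hq : 0 < w / ((1 - w) * a ^ 2) := div_pos hw0 (mul_pos (sub_pos.2 hw1) ha2)
    refine ⟨√(w / ((1 - w) * a ^ 2)), Real.sqrt_pos.2 hq, ?_⟩
    have : 1 - w ≠ 0 := (sub_pos.2 hw1).ne'
    rw [radialSubst, Real.sq_sqrt hq.le]
    field_simp
    ring

theorem integral_Ioi_eq_integral_pow_mul_inv (m : ℕ) {a : ℝ} (ha : a ≠ 0) (b : ℝ) :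
    2 * a ^ (2 * m + 2) * ∫ r in Ioi (0 : ℝ),
      r ^ (2 * m + 1) * (1 + r ^ 2 * a ^ 2) ^ (-(m + 1 : ℤ)) * (1 + r ^ 2 * b ^ 2)⁻¹ =
    ∫ w in (0 : ℝ)..1, w ^ m * (1 + (b ^ 2 / a ^ 2 - 1) * w)⁻¹ := by
  have hcov := integral_image_eq_integral_deriv_smul_of_monotoneOn measurableSet_Ioi
    (fun r _ => (hasDerivAt_radialSubst a r).hasDerivWithinAt)
    ((monotoneOn_radialSubst a).mono Ioi_subset_Ici_self)
    (fun w => w ^ m * (1 + (b ^ 2 / a ^ 2 - 1) * w)⁻¹)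
  rw [radialSubst_image_Ioi ha, ← integral_Ioc_eq_integral_Ioo,
    ← intervalIntegral.integral_of_le zero_le_one] at hcov
  rw [hcov, ← integral_const_mul]
  congr 1
  ext r
  have hw : radialSubst a r = r ^ 2 * a ^ 2 / (1 + r ^ 2 * a ^ 2) := by
    rw [radialSubst]; field_simp; ring
  have hden : 1 + (b ^ 2 / a ^ 2 - 1) * radialSubst a r
      = (1 + r ^ 2 * b ^ 2) / (1 + r ^ 2 * a ^ 2) := by
    rw [hw]; field_simp; ring
  rw [smul_eq_mul, hden, hw, zpow_neg, show ((m : ℤ) + 1) = ((m + 1 : ℕ) : ℤ) by push_cast; rfl,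
    zpow_natCast, div_pow]
  field_simp
  ring

theorem integral_modLog_general (m : ℕ) (a b : ℝ) (ha : 0 < a) (hb : 0 < b)
    (hab : a ≠ b) :
    2 * a ^ (2 * m) * ∫ r in Set.Ioi (0 : ℝ),
      r ^ (2 * m + 1) * (1 + r ^ 2 * a ^ 2) ^ (-(m + 1 : ℤ)) * (1 + r ^ 2 * b ^ 2)⁻¹ =
    (a ^ 2)⁻¹ * modLog m (b ^ 2 / a ^ 2) := by
  have hu : 0 < b ^ 2 / a ^ 2 := by positivity
  have hu1 : b ^ 2 / a ^ 2 ≠ 1 := by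
    rw [ne_eq, div_eq_one_iff_eq (by positivity), pow_left_inj₀ hb.le ha.le two_ne_zero]
    exact hab.symm
  rw [← integral_pow_mul_inv_one_add_sub_one_mul m hu hu1,
    ← integral_Ioi_eq_integral_pow_mul_inv m ha.ne' b, pow_add,
    eq_inv_mul_iff_mul_eq₀ (by positivity)]
  ring

/-- General spectral form of the Connes–Tretkoff rearrangement identities `𝒟_m = ℒ_m(Δ)`. -/
theorem integral_modLog (m : ℕ) (hm : 1 ≤ m) (a b : ℝ) (ha : 0 < a) (hb : 0 < b)
    (hab : a ≠ b) :
    2 * a ^ (2 * m) * ∫ r in Set.Ioi (0 : ℝ),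
      r ^ (2 * m + 1) * (1 + r ^ 2 * a ^ 2) ^ (-(m + 1 : ℤ)) * (1 + r ^ 2 * b ^ 2)⁻¹ =
    (a ^ 2)⁻¹ * modLog m (b ^ 2 / a ^ 2) :=
  integral_modLog_general m a b ha hb hab
end
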